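/- arXiv:1509.08100 — 4 statements merged into one kernel-verified Lean document; each statement's English description precedes it below -/
import Mathlib

section
/- Let d be an MPT density with tail index γ and tail constant C_d. Then the function g(x) = d(x)·x^(γ+1) is strictly increasing on (0, ∞). -/
open MeasureTheory Filter

/-- Cumulative distribution function of a density `d` with respect to Lebesgue measure. -/
noncomputable def cdf (d : ℝ → ℝ) (x : ℝ) : ℝ := ∫ t in Set.Iic x, d t

/-- A monotone polynomial tail (MPT) density with tail index `γ` and tail constant `Cd`:
a probability density function that is even (or supported on the nonnegative half-line),
strictly positive on `(0, ∞)`, satisfies `d x * x ^ (γ + 1) → Cd` as `x → ∞`, and has a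
monotone likelihood ratio: for every `θ > 1`, `x ↦ d (x / θ) / d x` is strictly increasing
on `(0, ∞)`. -/
structure IsMPT (d : ℝ → ℝ) (γ Cd : ℝ) : Prop where
  gamma_pos : 0 < γ
  Cd_pos : 0 < Cd
  nonneg : ∀ x, 0 ≤ d x
  integrable : Integrable d
  integral_one : ∫ x, d x = 1
  even_or_halfline : (∀ x, d (-x) = d x) ∨ (∀ x < 0, d x = 0)
  pos : ∀ x, 0 < x → 0 < d x
  tail : Tendsto (fun x => d x * x ^ (γ + 1)) atTop (nhds Cd)
  mlr : ∀ θ : ℝ, 1 < θ → StrictMonoOn (fun x => d (x / θ) / d x) (Set.Ioi 0)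

/-! For `θ > 1` the likelihood ratio `t ↦ d (t / θ) / d t` is strictly increasing, and the tail
condition forces it to tend to `θ ^ (γ + 1)`; hence it stays strictly below that limit. Taking
`θ = y / x` at the point `y` gives `d x / d y < (y / x) ^ (γ + 1)`, i.e. `g x < g y`. -/

open Topology

theorem StrictMonoOn.lt_of_tendsto_atTop {α β : Type*} [LinearOrder α] [NoMaxOrder α]
    [Preorder β] [TopologicalSpace β] [OrderClosedTopology β] {f : α → β} {a x : α} {L : β}
    (hf : StrictMonoOn f (Set.Ioi a)) (hL : Tendsto f atTop (𝓝 L)) (hx : a < x) : f x < L := by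
  have : Nonempty α := ⟨x⟩
  obtain ⟨z, hxz⟩ := exists_gt x
  have haz : a < z := hx.trans hxz
  have hfz : f z ≤ L := ge_of_tendsto hL <| by
    filter_upwards [eventually_ge_atTop z] with t hzt
    exact hf.monotoneOn haz (haz.trans_le hzt) hzt
  exact (hf hx haz hxz).trans_le hfz

theorem tendsto_div_comp_div_of_tendsto_mul_rpow {d : ℝ → ℝ} {p C θ : ℝ}
    (hd : Tendsto (fun t => d t * t ^ p) atTop (𝓝 C)) (hC : C ≠ 0) (hθ : 0 < θ) :
    Tendsto (fun t => d (t / θ) / d t) atTop (𝓝 (θ ^ p)) := by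
  have hdθ : Tendsto (fun t => d (t / θ) * (t / θ) ^ p) atTop (𝓝 C) :=
    hd.comp (tendsto_id.atTop_div_const hθ)
  have hquot := (hdθ.div hd hC).mul_const (θ ^ p)
  rw [div_self hC, one_mul] at hquot
  refine hquot.congr' ?_
  filter_upwards [eventually_gt_atTop 0, hd.eventually_ne hC] with t ht hdt_mul
  have hdt : d t ≠ 0 := left_ne_zero_of_mul hdt_mul
  rw [Pi.div_apply, Real.div_rpow ht.le hθ.le]
  field_simp

/-- Proposition 1(1): for an MPT density `d`, `g x = d x * x ^ (γ + 1)` is strictly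
increasing on `(0, ∞)`. -/
theorem mpt_g_strictMonoOn (d : ℝ → ℝ) (γ Cd : ℝ) (h : IsMPT d γ Cd) :
    StrictMonoOn (fun x => d x * x ^ (γ + 1)) (Set.Ioi 0) := by
  intro x (hx : 0 < x) y (hy : 0 < y) hxy
  have hθ : 1 < y / x := (one_lt_div hx).mpr hxy
  have hratio : d (y / (y / x)) / d y < (y / x) ^ (γ + 1) :=
    (h.mlr _ hθ).lt_of_tendsto_atTop
      (tendsto_div_comp_div_of_tendsto_mul_rpow h.tail h.Cd_pos.ne' (by positivity)) hy
  rw [div_div_cancel₀ hy.ne', Real.div_rpow hy.le hx.le,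
    div_lt_div_iff₀ (h.pos y hy) (Real.rpow_pos_of_pos hx _)] at hratio
  simpa only [mul_comm] using hratio
end

section
/- Let d be an MPT density with tail index γ and tail constant C_d, with cdf D. Then for every θ > 1, the function x ↦ (1 − D(x/θ))/(1 − D(x)) is strictly increasing on (0, ∞). -/
/-!
The substitution `t ↦ t / θ` writes `1 - D (x / θ)` as `θ⁻¹ ∫_x^∞ d (t / θ) dt`, so up to
the factor `θ⁻¹` the survival ratio is the ratio of the tail integrals of `f = d (· / θ)` and
`d`. Tail integrals inherit a strictly increasing likelihood ratio: for `x < y` and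
`c = f y / d y`, `f < c d` on `(x, y)` while `f ≥ c d` on `(y, ∞)`, which compares the two
ratios.
-/

open MeasureTheory Filter

open Set Function

lemma setIntegral_pos_of_forall_pos {X : Type*} [MeasurableSpace X] {μ : Measure X}
    {f : X → ℝ} {s : Set X} (hs : MeasurableSet s) (hμs : μ s ≠ 0)
    (hf : IntegrableOn f s μ) (hpos : ∀ t ∈ s, 0 < f t) : 0 < ∫ t in s, f t ∂μ := by
  rw [setIntegral_pos_iff_support_of_nonneg_ae
    (ae_restrict_of_forall_mem hs fun t ht => (hpos t ht).le) hf,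
    inter_eq_right.mpr fun t ht => mem_support.mpr (hpos t ht).ne']
  exact pos_iff_ne_zero.mpr hμs

lemma integral_comp_div_Ioi {E : Type*} [NormedAddCommGroup E] [NormedSpace ℝ E]
    (g : ℝ → E) (x : ℝ) {θ : ℝ} (hθ : 0 < θ) :
    ∫ t in Ioi x, g (t / θ) = θ • ∫ t in Ioi (x / θ), g t := by
  simpa only [div_eq_mul_inv, inv_inv] using integral_comp_mul_right_Ioi g x (inv_pos.mpr hθ)

section LikelihoodRatio

variable {f g : ℝ → ℝ} {a : ℝ}

lemma intervalIntegral_lt_mul_of_strictMonoOn_div {x y : ℝ} (hf : IntegrableOn f (Ioi a))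
    (hg : IntegrableOn g (Ioi a)) (hg_pos : ∀ t ∈ Ioi a, 0 < g t)
    (hfg : StrictMonoOn (fun t => f t / g t) (Ioi a)) (hx : x ∈ Ioi a) (hxy : x < y) :
    ∫ t in x..y, f t < f y / g y * ∫ t in x..y, g t := by
  have hIcc : Icc x y ⊆ Ioi a := fun t ht => lt_of_lt_of_le hx ht.1
  have hf_xy : IntervalIntegrable f volume x y :=
    (intervalIntegrable_iff_integrableOn_Icc_of_le hxy.le).mpr (hf.mono_set hIcc)
  have hg_xy : IntervalIntegrable (fun t => f y / g y * g t) volume x y :=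
    ((intervalIntegrable_iff_integrableOn_Icc_of_le hxy.le).mpr (hg.mono_set hIcc)).const_mul _
  rw [← sub_pos, ← intervalIntegral.integral_const_mul,
    ← intervalIntegral.integral_sub hg_xy hf_xy]
  refine intervalIntegral.intervalIntegral_pos_of_pos_on (hg_xy.sub hf_xy) (fun t ht => ?_) hxy
  have ht_mem : t ∈ Ioi a := hIcc (Ioo_subset_Icc_self ht)
  have hlt : f t / g t < f y / g y := hfg ht_mem (hIcc (right_mem_Icc.mpr hxy.le)) ht.2
  rw [div_lt_iff₀ (hg_pos t ht_mem)] at hlt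
  linarith

lemma mul_integral_Ioi_le_of_strictMonoOn_div {y : ℝ} (hf : IntegrableOn f (Ioi a))
    (hg : IntegrableOn g (Ioi a)) (hg_pos : ∀ t ∈ Ioi a, 0 < g t)
    (hfg : StrictMonoOn (fun t => f t / g t) (Ioi a)) (hy : y ∈ Ioi a) :
    f y / g y * ∫ t in Ioi y, g t ≤ ∫ t in Ioi y, f t := by
  have hsub : Ioi y ⊆ Ioi a := Ioi_subset_Ioi (le_of_lt hy)
  rw [← integral_const_mul]
  refine setIntegral_mono_on ((hg.mono_set hsub).const_mul _) (hf.mono_set hsub)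
    measurableSet_Ioi fun t ht => ?_
  have hle : f y / g y ≤ f t / g t := (hfg hy (hsub ht) ht).le
  rwa [le_div_iff₀ (hg_pos t (hsub ht))] at hle

lemma strictMonoOn_integral_Ioi_div_integral_Ioi (hf : IntegrableOn f (Ioi a))
    (hg : IntegrableOn g (Ioi a)) (hg_pos : ∀ t ∈ Ioi a, 0 < g t)
    (hfg : StrictMonoOn (fun t => f t / g t) (Ioi a)) :
    StrictMonoOn (fun x => (∫ t in Ioi x, f t) / ∫ t in Ioi x, g t) (Ioi a) := by
  intro x hx y hy hxy
  have hsub : ∀ z ∈ Ioi a, Ioi z ⊆ Ioi a := fun z hz => Ioi_subset_Ioi (le_of_lt hz)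
  have htail_pos : ∀ z ∈ Ioi a, 0 < ∫ t in Ioi z, g t := fun z hz =>
    setIntegral_pos_of_forall_pos measurableSet_Ioi (by simp) (hg.mono_set (hsub z hz))
      fun t ht => hg_pos t (hsub z hz ht)
  have hg_mid_nonneg : 0 ≤ ∫ t in x..y, g t :=
    intervalIntegral.integral_nonneg hxy.le fun t ht => (hg_pos t (lt_of_lt_of_le hx ht.1)).le
  have hmid := intervalIntegral_lt_mul_of_strictMonoOn_div hf hg hg_pos hfg hx hxy
  have htail := mul_integral_Ioi_le_of_strictMonoOn_div hf hg hg_pos hfg hy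
  dsimp only
  rw [div_lt_div_iff₀ (htail_pos x hx) (htail_pos y hy),
    ← intervalIntegral.integral_interval_add_Ioi (hf.mono_set (hsub x hx))
      (hf.mono_set (hsub y hy)),
    ← intervalIntegral.integral_interval_add_Ioi (hg.mono_set (hsub x hx))
      (hg.mono_set (hsub y hy))]
  linarith [mul_lt_mul_of_pos_right hmid (htail_pos y hy),
    mul_le_mul_of_nonneg_left htail hg_mid_nonneg]

end LikelihoodRatio

lemma one_sub_cdf_eq_integral_Ioi {d : ℝ → ℝ} (hd : Integrable d) (hd_one : ∫ x, d x = 1)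
    (x : ℝ) : 1 - cdf d x = ∫ t in Ioi x, d t := by
  rw [← hd_one, ← intervalIntegral.integral_Iic_add_Ioi hd.integrableOn hd.integrableOn, cdf]
  ring

/-- Proposition 1(3): for an MPT density `d` with cdf `D` and any `θ > 1`,
`x ↦ (1 - D (x / θ)) / (1 - D x)` is strictly increasing on `(0, ∞)`. -/
theorem mpt_survival_ratio_strictMonoOn (d : ℝ → ℝ) (γ Cd : ℝ) (h : IsMPT d γ Cd)
    (θ : ℝ) (hθ : 1 < θ) :
    StrictMonoOn (fun x => (1 - cdf d (x / θ)) / (1 - cdf d x)) (Set.Ioi 0) := by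
  have hθ_pos : 0 < θ := zero_lt_one.trans hθ
  have hratio : (fun x => (1 - cdf d (x / θ)) / (1 - cdf d x)) =
      (θ⁻¹ * ·) ∘ fun x => (∫ t in Ioi x, d (t / θ)) / ∫ t in Ioi x, d t := by
    funext x
    simp only [comp_apply, one_sub_cdf_eq_integral_Ioi h.integrable h.integral_one,
      integral_comp_div_Ioi d x hθ_pos, smul_eq_mul, inv_mul_cancel_left₀ hθ_pos.ne',
      mul_div_assoc]
  rw [hratio]
  exact (strictMono_mul_left_of_pos (inv_pos.mpr hθ_pos)).comp_strictMonoOn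
    (strictMonoOn_integral_Ioi_div_integral_Ioi (h.integrable.comp_div hθ_pos.ne').integrableOn
      h.integrable.integrableOn h.pos (h.mlr θ hθ))
end

section
/- Under the asymptotic framework, any sequence ω_m of positive solutions of the Bayes oracle equation (1+u_m)^(−1/2)·d(ω·(1+u_m)^(−1/2))/d(ω) = v_m satisfies ω_m²/(1+u_m) → C and ω_m²/(C·(v_m/C_0)^(2/γ)) → 1 as m → ∞. -/
open MeasureTheory Filter Topology Set

theorem StrictMonoOn.tendsto_of_tendsto_apply {α β ι : Type*}
    [LinearOrder α] [TopologicalSpace α] [OrderTopology α]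
    [LinearOrder β] [TopologicalSpace β] [OrderTopology β]
    {f : α → β} {s : Set α} (hs : s.OrdConnected) (hf : StrictMonoOn f s)
    {l : Filter ι} {t : ι → α} {x : α} (hx : x ∈ s) (ht : ∀ᶠ i in l, t i ∈ s)
    (hlim : Tendsto (fun i => f (t i)) l (𝓝 (f x))) : Tendsto t l (𝓝 x) := by
  rw [tendsto_order]
  constructor
  · intro a hax
    by_cases ha : a ∈ s
    · filter_upwards [ht, hlim.eventually_const_lt (hf ha hx hax)] with i hi hfi
      exact (hf.lt_iff_lt ha hi).1 hfi
    · filter_upwards [ht] with i hi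
      by_contra! hia
      exact ha (hs.out hi hx ⟨hia, hax.le⟩)
  · intro b hxb
    by_cases hb : b ∈ s
    · filter_upwards [ht, hlim.eventually_lt_const (hf hx hb hxb)] with i hi hfi
      exact (hf.lt_iff_lt hi hb).1 hfi
    · filter_upwards [ht] with i hi
      by_contra! hbi
      exact hb (hs.out hx hi ⟨hxb.le, hbi⟩)

theorem exists_mul_rpow_lt_of_integrableOn {f : ℝ → ℝ} {p δ : ℝ}
    (hf : IntegrableOn f (Ioo 0 1)) (hp : 1 ≤ p) (hδ : 0 < δ) :
    ∃ x ∈ Ioo 0 1, f x * x ^ p < δ := by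
  by_contra! hge
  have hint : IntegrableOn (fun x : ℝ => x ^ (-p)) (Ioo 0 1) := by
    refine Integrable.mono' (hf.div_const δ) ?_ ?_
    · exact (continuousOn_id.rpow_const fun x hx => Or.inl hx.1.ne').aestronglyMeasurable
        measurableSet_Ioo
    · rw [ae_restrict_iff' measurableSet_Ioo]
      refine Eventually.of_forall fun x hx => ?_
      have hxp : 0 < x ^ p := Real.rpow_pos_of_pos hx.1 p
      rw [Real.norm_of_nonneg (Real.rpow_nonneg hx.1.le _), Real.rpow_neg hx.1.le,
        inv_le_iff_one_le_mul₀' hxp, mul_div_assoc', le_div_iff₀ hδ, one_mul, mul_comm]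
      exact hge x hx
  rw [intervalIntegral.integrableOn_Ioo_rpow_iff one_pos] at hint
  linarith

noncomputable def tailProfile (d : ℝ → ℝ) (γ x : ℝ) : ℝ := d x * x ^ (γ + 1)

namespace IsMPT

variable {d : ℝ → ℝ} {γ Cd : ℝ}

theorem tailProfile_pos (h : IsMPT d γ Cd) {x : ℝ} (hx : 0 < x) : 0 < tailProfile d γ x :=
  mul_pos (h.pos x hx) (Real.rpow_pos_of_pos hx _)

theorem tendsto_tailProfile_ratio (h : IsMPT d γ Cd) {ε : ℝ} (hε : 0 < ε) :
    Tendsto (fun x => tailProfile d γ (x * ε) / tailProfile d γ x) atTop (𝓝 1) := by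
  rw [← div_self h.Cd_pos.ne']
  exact (h.tail.comp (tendsto_id.atTop_mul_const hε)).div h.tail h.Cd_pos.ne'

/-- The likelihood-ratio condition with `θ = ε⁻¹`, rescaled by `ε ^ (γ + 1)`. -/
theorem strictMonoOn_tailProfile_ratio (h : IsMPT d γ Cd) {ε : ℝ} (hε0 : 0 < ε) (hε1 : ε < 1) :
    StrictMonoOn (fun x => tailProfile d γ (x * ε) / tailProfile d γ x) (Ioi 0) := by
  refine ((strictMono_mul_left_of_pos (Real.rpow_pos_of_pos hε0 (γ + 1))).comp_strictMonoOn
    (h.mlr ε⁻¹ (one_lt_inv₀ hε0 |>.2 hε1))).congr fun x hx => ?_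
  have hx : (0 : ℝ) < x := hx
  have hdx := (h.pos x hx).ne'
  simp only [Function.comp_apply, tailProfile, div_inv_eq_mul,
    Real.mul_rpow hx.le hε0.le]
  field_simp [(Real.rpow_pos_of_pos hx (γ + 1)).ne']

theorem tailProfile_ratio_lt_one (h : IsMPT d γ Cd) {ε : ℝ} (hε0 : 0 < ε) (hε1 : ε < 1)
    {x : ℝ} (hx : 0 < x) : tailProfile d γ (x * ε) / tailProfile d γ x < 1 := by
  have hmono := h.strictMonoOn_tailProfile_ratio hε0 hε1
  refine (hmono hx (by simp; linarith : x + 1 ∈ Ioi 0) (lt_add_one x)).trans_le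
    (ge_of_tendsto (h.tendsto_tailProfile_ratio hε0) ?_)
  filter_upwards [eventually_ge_atTop (x + 1)] with y hy
  exact hmono.monotoneOn (by simp; linarith : x + 1 ∈ Ioi 0) (by simp; linarith) hy

theorem strictMonoOn_tailProfile (h : IsMPT d γ Cd) : StrictMonoOn (tailProfile d γ) (Ioi 0) := by
  intro x hx y hy hxy
  have hy0 : (0 : ℝ) < y := hy
  have hε : x / y < 1 := (div_lt_one hy0).2 hxy
  have := h.tailProfile_ratio_lt_one (div_pos hx hy0) hε hy0
  rwa [mul_div_cancel₀ x hy0.ne', div_lt_one (h.tailProfile_pos hy0)] at this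

theorem tendsto_tailProfile_nhdsGT_zero (h : IsMPT d γ Cd) :
    Tendsto (tailProfile d γ) (𝓝[>] 0) (𝓝 0) := by
  rw [tendsto_order]
  refine ⟨fun a ha => eventually_nhdsWithin_of_forall fun x hx =>
    ha.trans (h.tailProfile_pos hx), fun b hb => ?_⟩
  obtain ⟨x₀, hx₀, hlt⟩ := exists_mul_rpow_lt_of_integrableOn h.integrable.integrableOn
    (by linarith [h.gamma_pos] : 1 ≤ γ + 1) hb
  filter_upwards [Ioo_mem_nhdsGT hx₀.1] with x hx
  exact (h.strictMonoOn_tailProfile hx.1 hx₀.1 hx.2).trans hlt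

theorem tendsto_atTop_of_tendsto_tailProfile_ratio (h : IsMPT d γ Cd) {ι : Type*}
    {l : Filter ι} {ε ω : ι → ℝ} (hε : Tendsto ε l (𝓝[>] 0)) (hω : ∀ᶠ i in l, 0 < ω i)
    {c : ℝ} (hc : 0 < c)
    (hlim : Tendsto (fun i => tailProfile d γ (ω i * ε i) / tailProfile d γ (ω i)) l (𝓝 c)) :
    Tendsto ω l atTop := by
  refine tendsto_atTop.2 fun K => ?_
  set K' := max K 1
  have hK' : 0 < K' := lt_max_of_lt_right one_pos
  have hsmall : Tendsto (fun i => tailProfile d γ (K' * ε i) / tailProfile d γ K') l (𝓝 0) := by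
    obtain ⟨hε0, hεpos⟩ := tendsto_nhdsWithin_iff.1 hε
    have hKε : Tendsto (fun i => K' * ε i) l (𝓝[>] 0) := tendsto_nhdsWithin_iff.2
      ⟨by simpa using hε0.const_mul K', hεpos.mono fun i hi => mul_pos hK' hi⟩
    simpa using (h.tendsto_tailProfile_nhdsGT_zero.comp hKε).div_const (tailProfile d γ K')
  filter_upwards [hsmall.eventually_lt hlim hc, hε (Ioo_mem_nhdsGT one_pos), hω]
    with i hlt hεi hωi
  by_contra! hωK
  exact ((h.strictMonoOn_tailProfile_ratio hεi.1 hεi.2).monotoneOn hωi hK'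
    (hωK.le.trans (le_max_left K 1))).not_gt hlt

theorem tendsto_mul_of_tailProfile_mul_eq (h : IsMPT d γ Cd) {ι : Type*} {l : Filter ι}
    {ε ω w : ι → ℝ} {c x₀ : ℝ} (hε : Tendsto ε l (𝓝[>] 0)) (hω : ∀ i, 0 < ω i)
    (hw : Tendsto w l (𝓝 c)) (hx₀ : 0 < x₀) (hcx₀ : c * Cd = tailProfile d γ x₀)
    (heq : ∀ i, tailProfile d γ (ω i * ε i) = w i * tailProfile d γ (ω i)) :
    Tendsto (fun i => ω i * ε i) l (𝓝 x₀) := by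
  have hc : 0 < c := pos_of_mul_pos_left (hcx₀ ▸ h.tailProfile_pos hx₀) h.Cd_pos.le
  have hωtop : Tendsto ω l atTop :=
    h.tendsto_atTop_of_tendsto_tailProfile_ratio hε (.of_forall hω) hc <| hw.congr fun i => by
      rw [heq, mul_div_cancel_right₀ _ (h.tailProfile_pos (hω i)).ne']
  refine h.strictMonoOn_tailProfile.tendsto_of_tendsto_apply ordConnected_Ioi hx₀
    (((tendsto_nhdsWithin_iff.1 hε).2).mono fun i hi => mul_pos (hω i) hi) ?_
  rw [← hcx₀]
  exact (hw.mul (h.tail.comp hωtop)).congr fun i => (heq i).symm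

end IsMPT

theorem tailProfile_mul_eq {d : ℝ → ℝ} {γ x ε : ℝ} (hx : 0 < x) (hdx : d x ≠ 0) (hε : 0 < ε) :
    tailProfile d γ (x * ε) = ε * d (x * ε) / d x * ε ^ γ * tailProfile d γ x := by
  rw [tailProfile, tailProfile, Real.mul_rpow hx.le hε.le, Real.rpow_add_one hε.ne']
  field_simp

theorem tendsto_mul_one_add_rpow_neg {ι : Type*} {l : Filter ι} {u v : ι → ℝ} {a L : ℝ}
    (hu : Tendsto u l atTop) (hvu : Tendsto (fun i => v i * u i ^ (-a)) l (𝓝 L)) :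
    Tendsto (fun i => v i * (1 + u i) ^ (-a)) l (𝓝 L) := by
  have hcorr : Tendsto (fun i => (1 + (u i)⁻¹) ^ (-a)) l (𝓝 1) := by
    simpa using (tendsto_const_nhds.add hu.inv_tendsto_atTop).rpow_const
      (Or.inl (by norm_num : (1 : ℝ) + 0 ≠ 0))
  have hlim := hvu.mul hcorr
  rw [mul_one] at hlim
  refine hlim.congr' ?_
  filter_upwards [hu.eventually_gt_atTop 0] with i hi
  rw [mul_assoc, ← Real.mul_rpow hi.le (by positivity), mul_add, mul_one,
    mul_inv_cancel₀ hi.ne', add_comm]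

theorem tendsto_one_add_rpow_neg_nhdsGT_zero {ι : Type*} {l : Filter ι} {u : ι → ℝ} {a : ℝ}
    (hu : Tendsto u l atTop) (ha : 0 < a) : Tendsto (fun i => (1 + u i) ^ (-a)) l (𝓝[>] 0) :=
  tendsto_nhdsWithin_iff.2 ⟨(tendsto_rpow_neg_atTop ha).comp (tendsto_atTop_add_const_left _ 1 hu),
    (hu.eventually_gt_atTop (-1)).mono fun i hi => Real.rpow_pos_of_pos (by linarith) _⟩

theorem mul_rpow_neg_half_rpow_two_div {a s γ : ℝ} (ha : 0 ≤ a) (hs : 0 ≤ s) (hγ : γ ≠ 0) :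
    (a * s ^ (-(γ / 2))) ^ (2 / γ) = a ^ (2 / γ) / s := by
  rw [Real.mul_rpow ha (Real.rpow_nonneg hs _), ← Real.rpow_mul hs,
    show -(γ / 2) * (2 / γ) = -1 by field_simp, Real.rpow_neg_one, ← div_eq_mul_inv]

theorem oracle_threshold_asymptotics_general (d : ℝ → ℝ) (γ Cd : ℝ) (h : IsMPT d γ Cd)
    (C : ℝ) (hC : 0 < C)
    (u v : ℕ → ℝ) (hu : ∀ m, 0 < u m) (hu' : Tendsto u atTop atTop)
    (hv : ∀ m, 0 < v m)
    (hvu : Tendsto (fun m => v m * u m ^ (-(γ / 2))) atTop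
      (nhds (C ^ ((γ + 1) / 2) * d (Real.sqrt C) / Cd)))
    (ω : ℕ → ℝ) (hω : ∀ m, 0 < ω m)
    (hωeq : ∀ m, (1 + u m) ^ (-(1 : ℝ) / 2) * d (ω m * (1 + u m) ^ (-(1 : ℝ) / 2)) / d (ω m)
      = v m) :
    Tendsto (fun m => ω m ^ 2 / (1 + u m)) atTop (nhds C) ∧
    Tendsto
      (fun m => ω m ^ 2 / (C * (v m / (C ^ ((γ + 1) / 2) * d (Real.sqrt C) / Cd)) ^ (2 / γ)))
      atTop (nhds 1) := by
  have hγ := h.gamma_pos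
  set C₀ := C ^ ((γ + 1) / 2) * d (Real.sqrt C) / Cd with hC₀
  have hC₀Cd : C₀ * Cd = tailProfile d γ (Real.sqrt C) := by
    rw [hC₀, div_mul_cancel₀ _ h.Cd_pos.ne', tailProfile, Real.sqrt_eq_rpow,
      ← Real.rpow_mul hC.le]
    ring_nf
  have hs : ∀ m, 0 < 1 + u m := fun m => by linarith [hu m]
  set ε : ℕ → ℝ := fun m => (1 + u m) ^ (-(1 : ℝ) / 2)
  have hε : Tendsto ε atTop (𝓝[>] 0) := by
    have := tendsto_one_add_rpow_neg_nhdsGT_zero hu' one_half_pos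
    rwa [← neg_div] at this
  set w : ℕ → ℝ := fun m => v m * (1 + u m) ^ (-(γ / 2))
  have hw : Tendsto w atTop (𝓝 C₀) := tendsto_mul_one_add_rpow_neg hu' hvu
  have ht : Tendsto (fun m => ω m * ε m) atTop (𝓝 (Real.sqrt C)) :=
    h.tendsto_mul_of_tailProfile_mul_eq hε hω hw (Real.sqrt_pos.2 hC) hC₀Cd fun m => by
      rw [tailProfile_mul_eq (hω m) (h.pos _ (hω m)).ne' (Real.rpow_pos_of_pos (hs m) _), hωeq,
        ← Real.rpow_mul (hs m).le, show -(1 : ℝ) / 2 * γ = -(γ / 2) by ring]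
  have hsq : Tendsto (fun m => ω m ^ 2 / (1 + u m)) atTop (𝓝 C) := by
    refine (Real.sq_sqrt hC.le ▸ ht.pow 2).congr fun m => ?_
    rw [mul_pow, ← Real.rpow_natCast (ε m), ← Real.rpow_mul (hs m).le]
    norm_num [Real.rpow_neg_one, div_eq_mul_inv]
  refine ⟨hsq, ?_⟩
  have hpow : Tendsto (fun m => C * ((v m / C₀) ^ (2 / γ) / (1 + u m))) atTop (𝓝 C) := by
    have hC₀pos : 0 < C₀ := pos_of_mul_pos_left (hC₀Cd ▸ h.tailProfile_pos (Real.sqrt_pos.2 hC))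
      h.Cd_pos.le
    have := ((hw.div_const C₀).rpow_const (p := 2 / γ) (Or.inr (by positivity))).const_mul C
    rw [div_self hC₀pos.ne', Real.one_rpow, mul_one] at this
    refine this.congr fun m => ?_
    rw [mul_div_right_comm, mul_rpow_neg_half_rpow_two_div (div_pos (hv m) hC₀pos).le (hs m).le
      hγ.ne']
  have hlim := hsq.div hpow hC.ne'
  rw [div_self hC.ne'] at hlim
  refine hlim.congr fun m => ?_
  rw [Pi.div_apply]
  field_simp [(hs m).ne']

/-- Proposition 2 (threshold part): under the asymptotic framework
`u_m → ∞`, `v_m * u_m ^ (-γ/2) → C₀ = C ^ ((γ+1)/2) * d (√C) / Cd`, any sequence of positive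
solutions `ω_m` of the Bayes oracle equation
`(1 + u_m) ^ (-1/2) * d (ω * (1 + u_m) ^ (-1/2)) / d ω = v_m` satisfies
`ω_m ^ 2 / (1 + u_m) → C` and `ω_m ^ 2 / (C * (v_m / C₀) ^ (2/γ)) → 1`. -/
theorem oracle_threshold_asymptotics (d : ℝ → ℝ) (γ Cd : ℝ) (h : IsMPT d γ Cd)
    (heven : ∀ x, d (-x) = d x) (hcont : ContinuousOn d (Set.Ioi 0))
    (C : ℝ) (hC : 0 < C)
    (u v : ℕ → ℝ) (hu : ∀ m, 0 < u m) (hu' : Tendsto u atTop atTop)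
    (hv : ∀ m, 0 < v m)
    (hvu : Tendsto (fun m => v m * u m ^ (-(γ / 2))) atTop
      (nhds (C ^ ((γ + 1) / 2) * d (Real.sqrt C) / Cd)))
    (ω : ℕ → ℝ) (hω : ∀ m, 0 < ω m)
    (hωeq : ∀ m, (1 + u m) ^ (-(1 : ℝ) / 2) * d (ω m * (1 + u m) ^ (-(1 : ℝ) / 2)) / d (ω m)
      = v m) :
    Tendsto (fun m => ω m ^ 2 / (1 + u m)) atTop (nhds C) ∧
    Tendsto
      (fun m => ω m ^ 2 / (C * (v m / (C ^ ((γ + 1) / 2) * d (Real.sqrt C) / Cd)) ^ (2 / γ)))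
      atTop (nhds 1) :=
  oracle_threshold_asymptotics_general d γ Cd h C hC u v hu hu' hv hvu ω hω hωeq
end

section
/- Under the asymptotic framework, a sequence of fixed thresholds ω_m > 0 satisfies v_m·2(1 − D(ω_m)) + 2D(ω_m·(1+u_m)^(−1/2)) − 1 → C_1 + C_2 (i.e., the fixed thresholding procedure is asymptotically Bayes optimal under sparsity) if and only if ω_m²/(C·(v_m/C_0)^(2/γ)) → 1 as m → ∞, where C_1 = 2√C·d(√C)/γ and C_2 = 2D(√C) − 1. -/
open MeasureTheory Filter

/-!
Put `s_m = C (v_m / C₀) ^ (2 / γ)`. The monotone likelihood ratio forces `ψ x = d x * x ^ (γ + 1)`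
to increase to `Cd`, so `1 - D x ~ Cd x ^ (-γ) / γ`; hence whenever `ω_m ^ 2 / s_m → r > 0` the
risk tends to `g r = C₁ r ^ (-γ/2) + 2 D (√(r C)) - 1`, and
`g r - g 1 = 2 ∫_{√C}^{√(r C)} t ^ (-(γ + 1)) (ψ t - ψ √C) dt > 0` for `r ≠ 1`.

Conversely, the monotone likelihood ratio also makes the risk quasiconvex in the threshold: its
derivative `2 κ d (κ ω) - 2 v d ω` changes sign at most once. If `ω_m ^ 2 / s_m` lay infinitely
on the far side of some `r ≠ 1` from `1`, the threshold `√(r s_m)` would lie between `√s_m` and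
`ω_m`, and its risk, tending to `g r`, would exceed both risks, which tend to `g 1`.
-/

open Set Topology

noncomputable section

def C₀ (d : ℝ → ℝ) (γ Cd C : ℝ) : ℝ := C ^ ((γ + 1) / 2) * d (Real.sqrt C) / Cd

def optThresholdSq (d : ℝ → ℝ) (γ Cd C v : ℝ) : ℝ := C * (v / C₀ d γ Cd C) ^ (2 / γ)

/-- `κ` stands for `(1 + u) ^ (-1/2)`. -/
def thresholdRisk (d : ℝ → ℝ) (v κ ω : ℝ) : ℝ :=
  v * (2 * (1 - cdf d ω)) + (2 * cdf d (ω * κ) - 1)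

/-- The limit of the risk when `ω_m ^ 2 / optThresholdSq d γ Cd C v_m → r`. -/
def limitRisk (d : ℝ → ℝ) (γ C r : ℝ) : ℝ :=
  2 * Real.sqrt C * d (Real.sqrt C) / γ * r ^ (-(γ / 2)) + (2 * cdf d (Real.sqrt (r * C)) - 1)

end

lemma mul_rpow_mul_rpow_neg (a : ℝ) {t : ℝ} (ht : 0 < t) (p : ℝ) : a * t ^ p * t ^ (-p) = a := by
  rw [mul_assoc, ← Real.rpow_add ht, add_neg_cancel, Real.rpow_zero, mul_one]

lemma setIntegral_Ioi_const_mul_rpow_mul_rpow {γ x : ℝ} (hγ : 0 < γ) (hx : 0 < x) (c : ℝ) :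
    (∫ t in Ioi x, c * t ^ (-(γ + 1))) * x ^ γ = c / γ := by
  rw [integral_const_mul, integral_Ioi_rpow_of_lt (by linarith) hx,
    show -(γ + 1) + 1 = -γ by ring, neg_div_neg_eq, mul_div_assoc', div_mul_eq_mul_div,
    mul_assoc, ← Real.rpow_add hx, neg_add_cancel, Real.rpow_zero, mul_one]

lemma integral_nonpos_or_integral_nonneg_of_crossing {g : ℝ → ℝ} {a b c : ℝ} (hab : a ≤ b)
    (hbc : b ≤ c) (hcross : ∀ s ∈ Ioc a b, ∀ t ∈ Ioc b c, 0 < g s → 0 < g t) :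
    ∫ x in a..b, g x ≤ 0 ∨ 0 ≤ ∫ x in b..c, g x := by
  rw [intervalIntegral.integral_of_le hab, intervalIntegral.integral_of_le hbc]
  by_cases hpos : ∃ s ∈ Ioc a b, 0 < g s
  · obtain ⟨s, hs, hgs⟩ := hpos
    exact Or.inr (setIntegral_nonneg measurableSet_Ioc fun t ht => (hcross s hs t ht hgs).le)
  · push Not at hpos
    exact Or.inl (setIntegral_nonpos measurableSet_Ioc hpos)

namespace IsMPT

variable {d : ℝ → ℝ} {γ Cd : ℝ}

lemma tendsto_ratio (h : IsMPT d γ Cd) {θ : ℝ} (hθ : 1 < θ) :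
    Tendsto (fun x => d (x / θ) / d x) atTop (𝓝 (θ ^ (γ + 1))) := by
  have hθ0 : 0 < θ := one_pos.trans hθ
  have hquot := ((h.tail.comp (tendsto_id.atTop_div_const hθ0)).div h.tail h.Cd_pos.ne').mul_const
    (θ ^ (γ + 1))
  rw [div_self h.Cd_pos.ne', one_mul] at hquot
  refine hquot.congr' ?_
  filter_upwards [eventually_gt_atTop 0] with x hx
  have := (h.pos x hx).ne'
  simp only [Pi.div_apply, Function.comp_apply, id]
  rw [Real.div_rpow hx.le hθ0.le]
  field_simp

lemma ratio_lt (h : IsMPT d γ Cd) {θ : ℝ} (hθ : 1 < θ) {x : ℝ} (hx : 0 < x) :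
    d (x / θ) / d x < θ ^ (γ + 1) := by
  have hmono := h.mlr θ hθ
  refine (hmono hx (by linarith : (0 : ℝ) < x + 1) (lt_add_one x)).trans_le ?_
  refine ge_of_tendsto (h.tendsto_ratio hθ) ?_
  filter_upwards [eventually_ge_atTop (x + 2)] with y hy
  exact (hmono (by linarith : (0 : ℝ) < x + 1) (by linarith : (0 : ℝ) < y) (by linarith)).le

lemma strictMonoOn_mul_rpow (h : IsMPT d γ Cd) :
    StrictMonoOn (fun x => d x * x ^ (γ + 1)) (Ioi 0) := by
  intro a (ha : 0 < a) b (hb : 0 < b) hab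
  have key := h.ratio_lt ((one_lt_div ha).mpr hab) hb
  rw [div_div_cancel₀ hb.ne', Real.div_rpow hb.le ha.le,
    div_lt_div_iff₀ (h.pos b hb) (Real.rpow_pos_of_pos ha _)] at key
  simpa [mul_comm] using key

lemma mul_rpow_le (h : IsMPT d γ Cd) {x : ℝ} (hx : 0 < x) : d x * x ^ (γ + 1) ≤ Cd :=
  ge_of_tendsto h.tail <| by
    filter_upwards [eventually_ge_atTop x] with y hy
    exact h.strictMonoOn_mul_rpow.monotoneOn hx (hx.trans_le hy) hy

lemma mul_rpow_mul_rpow_neg_lt (h : IsMPT d γ Cd) {a t : ℝ} (ha : 0 < a) (hat : a < t) :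
    d a * a ^ (γ + 1) * t ^ (-(γ + 1)) < d t := by
  have ht : 0 < t := ha.trans hat
  conv_rhs => rw [← mul_rpow_mul_rpow_neg (d t) ht (γ + 1)]
  exact mul_lt_mul_of_pos_right (h.strictMonoOn_mul_rpow ha ht hat) (Real.rpow_pos_of_pos ht _)

lemma lt_mul_rpow_mul_rpow_neg (h : IsMPT d γ Cd) {a t : ℝ} (ht : 0 < t) (hta : t < a) :
    d t < d a * a ^ (γ + 1) * t ^ (-(γ + 1)) := by
  conv_lhs => rw [← mul_rpow_mul_rpow_neg (d t) ht (γ + 1)]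
  exact mul_lt_mul_of_pos_right (h.strictMonoOn_mul_rpow ht (ht.trans hta) hta)
    (Real.rpow_pos_of_pos ht _)

lemma one_sub_cdf (h : IsMPT d γ Cd) (x : ℝ) : 1 - cdf d x = ∫ t in Ioi x, d t := by
  have key := intervalIntegral.integral_Iic_add_Ioi (μ := volume) (b := x)
    h.integrable.integrableOn h.integrable.integrableOn
  rw [h.integral_one] at key
  rw [cdf]
  linarith

lemma cdf_sub_cdf (h : IsMPT d γ Cd) (a b : ℝ) : cdf d b - cdf d a = ∫ t in a..b, d t :=
  intervalIntegral.integral_Iic_sub_Iic h.integrable.integrableOn h.integrable.integrableOn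

lemma continuous_cdf (h : IsMPT d γ Cd) : Continuous (cdf d) := by
  have hprim : cdf d = fun b => cdf d 0 + ∫ t in (0 : ℝ)..b, d t := by
    funext b
    rw [← h.cdf_sub_cdf]
    ring
  rw [hprim]
  exact continuous_const.add (h.integrable.continuous_primitive 0)

lemma mul_rpow_div_le_tail_mul_rpow (h : IsMPT d γ Cd) {x : ℝ} (hx : 0 < x) :
    d x * x ^ (γ + 1) / γ ≤ (∫ t in Ioi x, d t) * x ^ γ := by
  rw [← setIntegral_Ioi_const_mul_rpow_mul_rpow h.gamma_pos hx]
  refine mul_le_mul_of_nonneg_right ?_ (Real.rpow_nonneg hx.le _)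
  refine setIntegral_mono_on ((integrableOn_Ioi_rpow_of_lt (by linarith [h.gamma_pos]) hx).const_mul _)
    h.integrable.integrableOn measurableSet_Ioi fun t ht => ?_
  exact (h.mul_rpow_mul_rpow_neg_lt hx ht).le

lemma tail_mul_rpow_le (h : IsMPT d γ Cd) {x : ℝ} (hx : 0 < x) :
    (∫ t in Ioi x, d t) * x ^ γ ≤ Cd / γ := by
  rw [← setIntegral_Ioi_const_mul_rpow_mul_rpow h.gamma_pos hx]
  refine mul_le_mul_of_nonneg_right ?_ (Real.rpow_nonneg hx.le _)
  refine setIntegral_mono_on h.integrable.integrableOn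
    ((integrableOn_Ioi_rpow_of_lt (by linarith [h.gamma_pos]) hx).const_mul _) measurableSet_Ioi
    fun t (ht : x < t) => ?_
  have ht0 : 0 < t := hx.trans ht
  conv_lhs => rw [← mul_rpow_mul_rpow_neg (d t) ht0 (γ + 1)]
  exact mul_le_mul_of_nonneg_right (h.mul_rpow_le ht0) (Real.rpow_nonneg ht0.le _)

lemma tendsto_tail_mul_rpow (h : IsMPT d γ Cd) :
    Tendsto (fun x => (∫ t in Ioi x, d t) * x ^ γ) atTop (𝓝 (Cd / γ)) :=
  tendsto_of_tendsto_of_tendsto_of_le_of_le' (h.tail.div_const γ) tendsto_const_nhds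
    (by filter_upwards [eventually_gt_atTop 0] with x hx using h.mul_rpow_div_le_tail_mul_rpow hx)
    (by filter_upwards [eventually_gt_atTop 0] with x hx using h.tail_mul_rpow_le hx)

lemma integral_sub_mul_rpow_pos (h : IsMPT d γ Cd) {a b : ℝ} (ha : 0 < a) (hb : 0 < b)
    (hab : a ≠ b) : 0 < ∫ t in a..b, (d t - d a * a ^ (γ + 1) * t ^ (-(γ + 1))) := by
  have hint : IntervalIntegrable (fun t => d t - d a * a ^ (γ + 1) * t ^ (-(γ + 1))) volume a b :=
    h.integrable.intervalIntegrable.sub <| (intervalIntegral.intervalIntegrable_rpow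
      (Or.inr fun h0 => (lt_min ha hb).not_ge h0.1)).const_mul _
  rcases hab.lt_or_gt with hlt | hgt
  · exact intervalIntegral.intervalIntegral_pos_of_pos_on hint
      (fun t ht => sub_pos.2 (h.mul_rpow_mul_rpow_neg_lt ha ht.1)) hlt
  · rw [intervalIntegral.integral_symm, neg_pos, ← neg_pos, ← intervalIntegral.integral_neg]
    exact intervalIntegral.intervalIntegral_pos_of_pos_on hint.symm.neg
      (fun t ht => neg_pos.2 (sub_neg.2 (h.lt_mul_rpow_mul_rpow_neg (hb.trans ht.1) ht.2))) hgt

theorem limitRisk_one_lt (h : IsMPT d γ Cd) {C r : ℝ} (hC : 0 < C) (hr : 0 < r) (hr1 : r ≠ 1) :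
    limitRisk d γ C 1 < limitRisk d γ C r := by
  have hγ := h.gamma_pos
  have hrC : 0 < r * C := mul_pos hr hC
  simp only [limitRisk, Real.one_rpow, one_mul, mul_one]
  set a := Real.sqrt C
  set b := Real.sqrt (r * C)
  have ha : 0 < a := Real.sqrt_pos.2 hC
  have hb : 0 < b := Real.sqrt_pos.2 hrC
  have hab : a ≠ b := fun hab => hr1 <| by
    have := (Real.sqrt_inj hC.le hrC.le).1 hab
    nlinarith
  have hb_rpow : b ^ (-γ) = r ^ (-(γ / 2)) * a ^ (-γ) := by
    rw [← Real.rpow_div_two_eq_sqrt _ hrC.le, ← Real.rpow_div_two_eq_sqrt _ hC.le,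
      Real.mul_rpow hr.le hC.le, neg_div]
  have hψa : d a * a ^ (γ + 1) * a ^ (-γ) = a * d a := by
    rw [mul_assoc, ← Real.rpow_add ha, show γ + 1 + -γ = 1 by ring, Real.rpow_one, mul_comm]
  have hintegral : ∫ t in a..b, (d t - d a * a ^ (γ + 1) * t ^ (-(γ + 1)))
      = cdf d b - cdf d a - a * d a / γ * (1 - r ^ (-(γ / 2))) := by
    have hzero : (0 : ℝ) ∉ uIcc a b := fun h0 => (lt_min ha hb).not_ge h0.1
    rw [intervalIntegral.integral_sub h.integrable.intervalIntegrable
        ((intervalIntegral.intervalIntegrable_rpow (Or.inr hzero)).const_mul _),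
      intervalIntegral.integral_const_mul, integral_rpow (Or.inr ⟨by linarith, hzero⟩),
      ← h.cdf_sub_cdf, show -(γ + 1) + 1 = -γ by ring, hb_rpow, ← hψa]
    field_simp
    ring
  have hpos := h.integral_sub_mul_rpow_pos ha hb hab
  rw [hintegral] at hpos
  linear_combination 2 * hpos

lemma thresholdRisk_sub_thresholdRisk (h : IsMPT d γ Cd) {κ : ℝ} (hκ : κ ≠ 0) (v a b : ℝ) :
    thresholdRisk d v κ b - thresholdRisk d v κ a
      = ∫ t in a..b, 2 * (κ * d (t * κ) - v * d t) := by
  have hscaled : ∫ t in a..b, κ * d (t * κ) = cdf d (b * κ) - cdf d (a * κ) := by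
    rw [intervalIntegral.integral_const_mul, intervalIntegral.integral_comp_mul_right _ hκ,
      smul_eq_mul, ← mul_assoc, mul_inv_cancel₀ hκ, one_mul, h.cdf_sub_cdf]
  rw [intervalIntegral.integral_const_mul, intervalIntegral.integral_sub
      ((h.integrable.comp_mul_right' hκ).intervalIntegrable.const_mul κ)
      (h.integrable.intervalIntegrable.const_mul v),
    hscaled, intervalIntegral.integral_const_mul, ← h.cdf_sub_cdf]
  simp only [thresholdRisk]
  ring

/-- `κ * d (t * κ) - v * d t` is half the derivative of the risk in the threshold; this is the
monotone likelihood ratio with `θ = κ⁻¹`. -/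
lemma single_crossing (h : IsMPT d γ Cd) {κ : ℝ} (hκ0 : 0 < κ) (hκ1 : κ < 1) (v : ℝ)
    {s t : ℝ} (hs : 0 < s) (hst : s < t) (hpos : 0 < κ * d (s * κ) - v * d s) :
    0 < κ * d (t * κ) - v * d t := by
  have hmono := h.mlr κ⁻¹ ((one_lt_inv₀ hκ0).2 hκ1)
  simp only [div_inv_eq_mul] at hmono
  have hds := h.pos s hs
  have hdt := h.pos t (hs.trans hst)
  have hvs : v < κ * (d (s * κ) / d s) := by
    rw [mul_div_assoc', lt_div_iff₀ hds]
    linarith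
  have hvt : v < κ * (d (t * κ) / d t) :=
    hvs.trans (mul_lt_mul_of_pos_left (hmono hs (hs.trans hst) hst) hκ0)
  rw [mul_div_assoc', lt_div_iff₀ hdt] at hvt
  linarith

lemma thresholdRisk_le_max (h : IsMPT d γ Cd) {κ : ℝ} (hκ0 : 0 < κ) (hκ1 : κ < 1) (v : ℝ)
    {a b c : ℝ} (ha : 0 < a) (hab : a ≤ b) (hbc : b ≤ c) :
    thresholdRisk d v κ b ≤ max (thresholdRisk d v κ a) (thresholdRisk d v κ c) := by
  have hsub := h.thresholdRisk_sub_thresholdRisk hκ0.ne' v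
  rcases integral_nonpos_or_integral_nonneg_of_crossing hab hbc
      fun s hs t ht hgs => mul_pos two_pos <| h.single_crossing hκ0 hκ1 v (ha.trans hs.1)
        (hs.2.trans_lt ht.1) (pos_of_mul_pos_right hgs zero_le_two) with hle | hge
  · rw [← hsub a b] at hle
    exact le_max_of_le_left (by linarith)
  · rw [← hsub b c] at hge
    exact le_max_of_le_right (by linarith)

lemma thresholdRisk_le_max_of_mem_uIcc (h : IsMPT d γ Cd) {κ : ℝ} (hκ0 : 0 < κ) (hκ1 : κ < 1)
    (v : ℝ) {a b c : ℝ} (ha : 0 < a) (hc : 0 < c) (hb : b ∈ uIcc a c) :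
    thresholdRisk d v κ b ≤ max (thresholdRisk d v κ a) (thresholdRisk d v κ c) := by
  rcases mem_uIcc.1 hb with ⟨hab, hbc⟩ | ⟨hcb, hba⟩
  · exact h.thresholdRisk_le_max hκ0 hκ1 v ha hab hbc
  · rw [max_comm]
    exact h.thresholdRisk_le_max hκ0 hκ1 v hc hcb hba

end IsMPT

section Framework

variable {d : ℝ → ℝ} {γ Cd C : ℝ} {u v : ℕ → ℝ}

lemma C₀_pos (h : IsMPT d γ Cd) (hC : 0 < C) : 0 < C₀ d γ Cd C :=
  div_pos (mul_pos (Real.rpow_pos_of_pos hC _) (h.pos _ (Real.sqrt_pos.2 hC))) h.Cd_pos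

lemma optThresholdSq_pos (h : IsMPT d γ Cd) (hC : 0 < C) {v : ℝ} (hv : 0 < v) :
    0 < optThresholdSq d γ Cd C v :=
  mul_pos hC (Real.rpow_pos_of_pos (div_pos hv (C₀_pos h hC)) _)

lemma C₀_mul_rpow_mul_rpow_eq (h : IsMPT d γ Cd) (hC : 0 < C) {v ω : ℝ} (hv : 0 < v)
    (hω : 0 < ω) :
    C₀ d γ Cd C * (ω ^ 2 / optThresholdSq d γ Cd C v * C) ^ (-(γ / 2)) * ω ^ γ = v := by
  have hC0 := C₀_pos h hC
  have hγ := h.gamma_pos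
  have hx : 0 < v / C₀ d γ Cd C := div_pos hv hC0
  have hsq : ω ^ 2 / optThresholdSq d γ Cd C v * C = ω ^ 2 / (v / C₀ d γ Cd C) ^ (2 / γ) := by
    rw [optThresholdSq]
    field_simp
  rw [hsq, Real.div_rpow (by positivity) (Real.rpow_nonneg hx.le _), ← Real.rpow_natCast,
    ← Real.rpow_mul hω.le, ← Real.rpow_mul hx.le, show (2 / γ) * -(γ / 2) = -1 by field_simp,
    Real.rpow_neg_one, div_inv_eq_mul, show ((2 : ℕ) : ℝ) * -(γ / 2) = -γ by push_cast; ring,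
    Real.rpow_neg hω.le]
  field_simp

lemma two_mul_C₀_mul_rpow_mul (h : IsMPT d γ Cd) (hC : 0 < C) {r : ℝ} (hr : 0 < r) :
    2 * C₀ d γ Cd C * (r * C) ^ (-(γ / 2)) * (Cd / γ)
      = 2 * Real.sqrt C * d (Real.sqrt C) / γ * r ^ (-(γ / 2)) := by
  have hpow : C ^ ((γ + 1) / 2) * C ^ (-(γ / 2)) = Real.sqrt C := by
    rw [← Real.rpow_add hC, Real.sqrt_eq_rpow]
    ring_nf
  have := h.Cd_pos.ne'
  rw [C₀, Real.mul_rpow hr.le hC.le, ← hpow]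
  field_simp

lemma tendsto_optThresholdSq_div_one_add (h : IsMPT d γ Cd) (hC : 0 < C)
    (hu : ∀ m, 0 < u m) (hu' : Tendsto u atTop atTop) (hv : ∀ m, 0 < v m)
    (hvu : Tendsto (fun m => v m * u m ^ (-(γ / 2))) atTop (𝓝 (C₀ d γ Cd C))) :
    Tendsto (fun m => optThresholdSq d γ Cd C (v m) / (1 + u m)) atTop (𝓝 C) := by
  have hC0 := C₀_pos h hC
  have hγ := h.gamma_pos
  have hratio : Tendsto (fun m => (v m * u m ^ (-(γ / 2)) / C₀ d γ Cd C) ^ (2 / γ)) atTop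
      (𝓝 1) := by
    simpa [div_self hC0.ne'] using (hvu.div_const (C₀ d γ Cd C)).rpow_const
      (p := 2 / γ) (Or.inl (div_self hC0.ne' ▸ one_ne_zero))
  have hfrac : Tendsto (fun m => 1 + (u m)⁻¹) atTop (𝓝 1) := by
    simpa using (tendsto_inv_atTop_zero.comp hu').const_add 1
  have hlim := (hratio.const_mul C).div hfrac one_ne_zero
  rw [mul_one, div_one] at hlim
  refine hlim.congr fun m => ?_
  have hum := hu m
  simp only [Pi.div_apply]
  rw [mul_div_right_comm (v m), Real.mul_rpow (div_pos (hv m) hC0).le (by positivity),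
    ← Real.rpow_mul hum.le, show -(γ / 2) * (2 / γ) = -1 by field_simp, Real.rpow_neg_one,
    optThresholdSq]
  field_simp
  ring

theorem tendsto_thresholdRisk (h : IsMPT d γ Cd) (hC : 0 < C)
    (hu : ∀ m, 0 < u m) (hu' : Tendsto u atTop atTop) (hv : ∀ m, 0 < v m)
    (hvu : Tendsto (fun m => v m * u m ^ (-(γ / 2))) atTop (𝓝 (C₀ d γ Cd C)))
    {ω : ℕ → ℝ} (hω : ∀ m, 0 < ω m) {r : ℝ} (hr : 0 < r)
    (hρ : Tendsto (fun m => ω m ^ 2 / optThresholdSq d γ Cd C (v m)) atTop (𝓝 r)) :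
    Tendsto (fun m => thresholdRisk d (v m) ((1 + u m) ^ (-(1 : ℝ) / 2)) (ω m)) atTop
      (𝓝 (limitRisk d γ C r)) := by
  have hs : ∀ m, 0 < optThresholdSq d γ Cd C (v m) := fun m => optThresholdSq_pos h hC (hv m)
  have hu1 : ∀ m, 0 < 1 + u m := fun m => by linarith [hu m]
  have hs1 := tendsto_optThresholdSq_div_one_add h hC hu hu' hv hvu
  have hsTop : Tendsto (fun m => optThresholdSq d γ Cd C (v m)) atTop atTop :=
    (hs1.pos_mul_atTop hC (tendsto_atTop_add_const_left _ 1 hu')).congr fun m =>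
      div_mul_cancel₀ _ (hu1 m).ne'
  have hωTop : Tendsto ω atTop atTop := by
    refine (Real.tendsto_sqrt_atTop.comp (hρ.pos_mul_atTop hr hsTop)).congr fun m => ?_
    simp only [Function.comp_apply, div_mul_cancel₀ _ (hs m).ne', Real.sqrt_sq (hω m).le]
  have htypeI : Tendsto (fun m => v m * (2 * (1 - cdf d (ω m)))) atTop
      (𝓝 (2 * Real.sqrt C * d (Real.sqrt C) / γ * r ^ (-(γ / 2)))) := by
    rw [← two_mul_C₀_mul_rpow_mul h hC hr]
    refine ((((hρ.mul_const C).rpow_const (Or.inl (mul_pos hr hC).ne')).const_mul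
      (2 * C₀ d γ Cd C)).mul (h.tendsto_tail_mul_rpow.comp hωTop)).congr fun m => ?_
    conv_rhs => rw [h.one_sub_cdf, ← C₀_mul_rpow_mul_rpow_eq h hC (hv m) (hω m)]
    simp only [Function.comp_apply]
    ring
  have hscaled : Tendsto (fun m => ω m * (1 + u m) ^ (-(1 : ℝ) / 2)) atTop
      (𝓝 (Real.sqrt (r * C))) := by
    refine (hρ.mul hs1).sqrt.congr fun m => ?_
    rw [div_mul_div_cancel₀ (hs m).ne', Real.sqrt_div' _ (hu1 m).le, Real.sqrt_sq (hω m).le,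
      Real.sqrt_eq_rpow, neg_div, Real.rpow_neg (hu1 m).le, div_eq_mul_inv]
  exact htypeI.add ((((h.continuous_cdf.tendsto _).comp hscaled).const_mul 2).sub_const 1)

lemma eventually_notMem_uIcc (h : IsMPT d γ Cd) (hC : 0 < C)
    (hu : ∀ m, 0 < u m) (hu' : Tendsto u atTop atTop) (hv : ∀ m, 0 < v m)
    (hvu : Tendsto (fun m => v m * u m ^ (-(γ / 2))) atTop (𝓝 (C₀ d γ Cd C)))
    {ω : ℕ → ℝ} (hω : ∀ m, 0 < ω m)
    (hrisk : Tendsto (fun m => thresholdRisk d (v m) ((1 + u m) ^ (-(1 : ℝ) / 2)) (ω m)) atTop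
      (𝓝 (limitRisk d γ C 1)))
    {r : ℝ} (hr : 0 < r) (hr1 : r ≠ 1) :
    ∀ᶠ m in atTop, r ∉ uIcc 1 (ω m ^ 2 / optThresholdSq d γ Cd C (v m)) := by
  have hs : ∀ m, 0 < optThresholdSq d γ Cd C (v m) := fun m => optThresholdSq_pos h hC (hv m)
  have hfixed : ∀ q, 0 < q → Tendsto (fun m => thresholdRisk d (v m) ((1 + u m) ^ (-(1 : ℝ) / 2))
      (Real.sqrt (q * optThresholdSq d γ Cd C (v m)))) atTop (𝓝 (limitRisk d γ C q)) :=
    fun q hq => tendsto_thresholdRisk h hC hu hu' hv hvu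
      (fun m => Real.sqrt_pos.2 (mul_pos hq (hs m))) hq <| tendsto_const_nhds.congr fun m => by
        rw [Real.sq_sqrt (mul_pos hq (hs m)).le, mul_div_cancel_right₀ _ (hs m).ne']
  have hgap := h.limitRisk_one_lt hC hr hr1
  filter_upwards [(hfixed 1 one_pos).eventually_lt (hfixed r hr) hgap,
    hrisk.eventually_lt (hfixed r hr) hgap] with m hone hω' hmem
  have hκ0 : 0 < (1 + u m) ^ (-(1 : ℝ) / 2) := Real.rpow_pos_of_pos (by linarith [hu m]) _
  have hκ1 : (1 + u m) ^ (-(1 : ℝ) / 2) < 1 :=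
    Real.rpow_lt_one_of_one_lt_of_neg (by linarith [hu m]) (by norm_num)
  have hmono : Monotone fun q => Real.sqrt (q * optThresholdSq d γ Cd C (v m)) :=
    fun a b hab => Real.sqrt_le_sqrt (mul_le_mul_of_nonneg_right hab (hs m).le)
  have hsqrt := hmono.image_uIcc_subset (mem_image_of_mem _ hmem)
  rw [div_mul_cancel₀ _ (hs m).ne', Real.sqrt_sq (hω m).le] at hsqrt
  exact (h.thresholdRisk_le_max_of_mem_uIcc hκ0 hκ1 _
    (Real.sqrt_pos.2 (mul_pos one_pos (hs m))) (hω m) hsqrt).not_gt (max_lt hone hω')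

theorem tendsto_sq_div_optThresholdSq (h : IsMPT d γ Cd) (hC : 0 < C)
    (hu : ∀ m, 0 < u m) (hu' : Tendsto u atTop atTop) (hv : ∀ m, 0 < v m)
    (hvu : Tendsto (fun m => v m * u m ^ (-(γ / 2))) atTop (𝓝 (C₀ d γ Cd C)))
    {ω : ℕ → ℝ} (hω : ∀ m, 0 < ω m)
    (hrisk : Tendsto (fun m => thresholdRisk d (v m) ((1 + u m) ^ (-(1 : ℝ) / 2)) (ω m)) atTop
      (𝓝 (limitRisk d γ C 1))) :
    Tendsto (fun m => ω m ^ 2 / optThresholdSq d γ Cd C (v m)) atTop (𝓝 1) := by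
  refine tendsto_order.2 ⟨fun a ha => ?_, fun b hb => ?_⟩
  · rcases le_or_gt a 0 with ha0 | ha0
    · exact Eventually.of_forall fun m =>
        ha0.trans_lt (div_pos (pow_pos (hω m) 2) (optThresholdSq_pos h hC (hv m)))
    · filter_upwards [eventually_notMem_uIcc h hC hu hu' hv hvu hω hrisk ha0 ha.ne] with m hm
      by_contra! hle
      exact hm (mem_uIcc.2 (Or.inr ⟨hle, ha.le⟩))
  · filter_upwards [eventually_notMem_uIcc h hC hu hu' hv hvu hω hrisk (one_pos.trans hb)
      hb.ne'] with m hm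
    by_contra! hle
    exact hm (mem_uIcc.2 (Or.inl ⟨hb.le, hle⟩))

end Framework

theorem fixed_threshold_ABOS_iff_general (d : ℝ → ℝ) (γ Cd : ℝ) (h : IsMPT d γ Cd)
    (C : ℝ) (hC : 0 < C)
    (u v : ℕ → ℝ) (hu : ∀ m, 0 < u m) (hu' : Tendsto u atTop atTop)
    (hv : ∀ m, 0 < v m)
    (hvu : Tendsto (fun m => v m * u m ^ (-(γ / 2))) atTop
      (nhds (C ^ ((γ + 1) / 2) * d (Real.sqrt C) / Cd)))
    (ω : ℕ → ℝ) (hω : ∀ m, 0 < ω m) :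
    Tendsto
      (fun m => v m * (2 * (1 - cdf d (ω m)))
        + (2 * cdf d (ω m * (1 + u m) ^ (-(1 : ℝ) / 2)) - 1)) atTop
      (nhds (2 * Real.sqrt C * d (Real.sqrt C) / γ + (2 * cdf d (Real.sqrt C) - 1))) ↔
    Tendsto
      (fun m => ω m ^ 2 / (C * (v m / (C ^ ((γ + 1) / 2) * d (Real.sqrt C) / Cd)) ^ (2 / γ)))
      atTop (nhds 1) := by
  have hlimit : limitRisk d γ C 1
      = 2 * Real.sqrt C * d (Real.sqrt C) / γ + (2 * cdf d (Real.sqrt C) - 1) := by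
    simp [limitRisk]
  rw [← hlimit]
  exact ⟨tendsto_sq_div_optThresholdSq h hC hu hu' hv hvu hω,
    tendsto_thresholdRisk h hC hu hu' hv hvu hω one_pos⟩

/-- Theorem 1: under the asymptotic framework, a sequence of fixed thresholds `ω_m > 0` has
Bayes risk per test `v_m * t₁(ω_m) + t₂(ω_m)` converging to the optimal value `C₁ + C₂`
(i.e. the procedure is ABOS) if and only if `ω_m ^ 2 / (C * (v_m / C₀) ^ (2/γ)) → 1`. -/
theorem fixed_threshold_ABOS_iff (d : ℝ → ℝ) (γ Cd : ℝ) (h : IsMPT d γ Cd)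
    (heven : ∀ x, d (-x) = d x) (hcont : ContinuousOn d (Set.Ioi 0))
    (C : ℝ) (hC : 0 < C)
    (u v : ℕ → ℝ) (hu : ∀ m, 0 < u m) (hu' : Tendsto u atTop atTop)
    (hv : ∀ m, 0 < v m)
    (hvu : Tendsto (fun m => v m * u m ^ (-(γ / 2))) atTop
      (nhds (C ^ ((γ + 1) / 2) * d (Real.sqrt C) / Cd)))
    (ω : ℕ → ℝ) (hω : ∀ m, 0 < ω m) :
    Tendsto
      (fun m => v m * (2 * (1 - cdf d (ω m)))
        + (2 * cdf d (ω m * (1 + u m) ^ (-(1 : ℝ) / 2)) - 1)) atTop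
      (nhds (2 * Real.sqrt C * d (Real.sqrt C) / γ + (2 * cdf d (Real.sqrt C) - 1))) ↔
    Tendsto
      (fun m => ω m ^ 2 / (C * (v m / (C ^ ((γ + 1) / 2) * d (Real.sqrt C) / Cd)) ^ (2 / γ)))
      atTop (nhds 1) :=
  fixed_threshold_ABOS_iff_general d γ Cd h C hC u v hu hu' hv hvu ω hω
end
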